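/- arXiv:1406.1133 — 2 statements merged into one kernel-verified Lean document; each statement's English description precedes it below -/
import Mathlib

section
/- Let V be a finite set, R : V → V → Prop a relation whose transitive closure is irreflexive, c : V → ℝ a nonnegative weight function, s₀ ∈ V a vertex with no R-predecessor such that every v ≠ s₀ has an R-predecessor, and z₀ ∈ V a vertex with no R-successor such that every v ≠ z₀ has an R-successor. Suppose e : V → ℝ satisfies e(s₀) = 0 and e(v) = max{ e(u) + c(u) : R u v } for all v ≠ s₀; suppose ℓ' : V → ℝ satisfies ℓ'(z₀) = 0 and ℓ'(v) = min{ ℓ'(w) : R v w } − c(v) for all v ≠ z₀; and define ℓ(v) = ℓ'(v) − ℓ'(s₀). Then e(v) ≤ ℓ(v) for every v ∈ V. -/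
/-- Eqs. (7)–(11): in a finite acyclic digraph with a single entry node `s₀` and a
single exit node `z₀`, every node's earliest release time `e v` is at most its latest
release time `ℓ v = ℓ' v - ℓ' s₀`. -/
theorem stmt_3 (V : Type*) [Fintype V] (R : V → V → Prop)
    (hacyc : Irreflexive (Relation.TransGen R))
    (c : V → ℝ) (hc : ∀ v, 0 ≤ c v)
    (s₀ : V) (hs₀ : ∀ u, ¬ R u s₀) (hpred : ∀ v, v ≠ s₀ → ∃ u, R u v)
    (z₀ : V) (hz₀ : ∀ w, ¬ R z₀ w) (hsucc : ∀ v, v ≠ z₀ → ∃ w, R v w)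
    (e : V → ℝ) (he0 : e s₀ = 0)
    (herec : ∀ v, v ≠ s₀ → IsGreatest {x : ℝ | ∃ u, R u v ∧ x = e u + c u} (e v))
    (l' : V → ℝ) (hl0 : l' z₀ = 0)
    (hlrec : ∀ v, v ≠ z₀ → IsLeast {x : ℝ | ∃ w, R v w ∧ x = l' w} (l' v + c v))
    (l : V → ℝ) (hl : ∀ v, l v = l' v - l' s₀) :
    ∀ v, e v ≤ l v := by
  have wf : WellFounded (Relation.TransGen R) :=
    @Finite.wellFounded_of_trans_of_irrefl V _ _ ⟨fun _ _ _ => Relation.TransGen.trans⟩ ⟨hacyc⟩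
  have key : ∀ v, l' s₀ + e v ≤ l' v := by
    intro v
    induction v using wf.induction with
    | _ v ih =>
      by_cases hv : v = s₀
      · subst hv; simp [he0]
      · obtain ⟨⟨u, hRu, hxu⟩, _⟩ := herec v hv
        have hu : u ≠ z₀ := fun h => hz₀ v (h ▸ hRu)
        have hlb := (hlrec u hu).2 ⟨v, hRu, rfl⟩
        have ihu := ih u (Relation.TransGen.single hRu)
        rw [hxu]
        linarith
  intro v
  have := key v
  rw [hl]
  linarith
end

section
/- Let T > 0, let C be a real number with 0 ≤ C ≤ T, let a ∈ ℝ and Δ ≥ 0, let N be a natural number, and let r : ℕ → ℝ satisfy r(k+1) ≥ r(k) + T for all k. Then ∑_{k < N, a ≤ r(k) < a + Δ} min(C, (a + Δ) − r(k)) ≤ ⌊Δ/T⌋·C + min(Δ − ⌊Δ/T⌋·T, C). -/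
/-- Eq. (19): upper bound on the workload request of a sporadic Liu & Layland task
without carry-in in a window `[a, a + Δ)`: jobs are released at least `T` apart, each
demanding at most `C ≤ T`, and a job released at `r k` inside the window contributes
at most `min(C, (a + Δ) - r k)`. -/
theorem stmt_8 (T C a Δ : ℝ) (hT : 0 < T) (hC0 : 0 ≤ C) (hCT : C ≤ T) (hΔ : 0 ≤ Δ)
    (N : ℕ) (r : ℕ → ℝ) (hr : ∀ k, r k + T ≤ r (k + 1)) :
    ∑ k ∈ (Finset.range N).filter (fun k => a ≤ r k ∧ r k < a + Δ),
        min C ((a + Δ) - r k) ≤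
      (⌊Δ / T⌋ : ℝ) * C + min (Δ - (⌊Δ / T⌋ : ℝ) * T) C := by
  set S := (Finset.range N).filter (fun k => a ≤ r k ∧ r k < a + Δ) with hSdef
  have hrmono : ∀ k j : ℕ, r k + (j : ℝ) * T ≤ r (k + j) := by
    intro k j
    induction j with
    | zero => simp
    | succ j ih =>
      have h2 := hr (k + j)
      push_cast
      have : r k + ((j : ℝ) + 1) * T = (r k + (j : ℝ) * T) + T := by ring
      rw [this]
      calc (r k + (j : ℝ) * T) + T ≤ r (k + j) + T := by linarith
        _ ≤ r (k + j + 1) := hr _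
  set n : ℕ := ⌊Δ / T⌋.toNat with hn
  have hfl : (⌊Δ / T⌋ : ℝ) = (n : ℝ) := by
    rw [hn]
    norm_cast
    exact (Int.toNat_of_nonneg (Int.le_floor.mpr (by push_cast; positivity))).symm
  have hnle : (n : ℝ) ≤ Δ / T := by
    have := Int.floor_le (Δ / T); rwa [hfl] at this
  have hnT : (n : ℝ) * T ≤ Δ := (le_div_iff₀ hT).1 hnle
  have hlt : Δ < ((n : ℝ) + 1) * T := by
    have := Int.lt_floor_add_one (Δ / T)
    rw [hfl] at this
    have := (div_lt_iff₀ hT).1 this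
    linarith
  rw [hfl]
  rcases S.eq_empty_or_nonempty with hS | hS
  · rw [hS]
    simp only [Finset.sum_empty]
    have : 0 ≤ min (Δ - (n : ℝ) * T) C := le_min (by linarith) hC0
    have : 0 ≤ (n : ℝ) * C := by positivity
    linarith [le_min (show (0:ℝ) ≤ Δ - (n : ℝ) * T by linarith) hC0]
  · set k0 := S.min' hS with hk0
    have hk0S : k0 ∈ S := S.min'_mem hS
    have hk0a : a ≤ r k0 := by
      rw [hSdef] at hk0S
      exact (Finset.mem_filter.1 hk0S).2.1
    -- every k ∈ S satisfies k0 ≤ k and k ≤ k0 + n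
    have hmem : ∀ k ∈ S, k0 ≤ k ∧ k ≤ k0 + n := by
      intro k hk
      have hle : k0 ≤ k := S.min'_le k hk
      refine ⟨hle, ?_⟩
      have hrk : r k < a + Δ := by
        rw [hSdef] at hk
        exact (Finset.mem_filter.1 hk).2.2
      have hsplit : r k0 + ((k - k0 : ℕ) : ℝ) * T ≤ r k := by
        have := hrmono k0 (k - k0)
        rwa [Nat.add_sub_cancel' hle] at this
      by_contra hc
      push_neg at hc
      have h1 : n + 1 ≤ k - k0 := by omega
      have h2 : ((n : ℝ) + 1) ≤ ((k - k0 : ℕ) : ℝ) := by exact_mod_cast h1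
      have : a + ((n : ℝ) + 1) * T ≤ r k := by nlinarith [hsplit, hk0a, hT.le]
      linarith
    have hbound : ∀ k ∈ S, min C ((a + Δ) - r k) ≤
        min C (Δ - ((k - k0 : ℕ) : ℝ) * T) := by
      intro k hk
      have hle : k0 ≤ k := (hmem k hk).1
      have hsplit : r k0 + ((k - k0 : ℕ) : ℝ) * T ≤ r k := by
        have := hrmono k0 (k - k0)
        rwa [Nat.add_sub_cancel' hle] at this
      exact min_le_min le_rfl (by linarith)
    clear_value n k0
    calc ∑ k ∈ S, min C ((a + Δ) - r k)
        ≤ ∑ k ∈ S, min C (Δ - ((k - k0 : ℕ) : ℝ) * T) := Finset.sum_le_sum hbound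
      _ ≤ ∑ k ∈ Finset.Icc k0 (k0 + n), min C (Δ - ((k - k0 : ℕ) : ℝ) * T) := by
          apply Finset.sum_le_sum_of_subset_of_nonneg
          · intro k hk
            have := hmem k hk
            exact Finset.mem_Icc.2 this
          · intro k hk _
            have hk' : k ≤ k0 + n := (Finset.mem_Icc.1 hk).2
            have h1 : k - k0 ≤ n := by omega
            have h2 : ((k - k0 : ℕ) : ℝ) ≤ (n : ℝ) := by exact_mod_cast h1
            apply le_min hC0
            nlinarith [hT.le]
      _ = ∑ j ∈ Finset.range (n + 1), min C (Δ - (j : ℝ) * T) := by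
          refine Finset.sum_nbij' (fun k => k - k0) (fun j => k0 + j) ?_ ?_ ?_ ?_ ?_
          · intro k hk
            have := Finset.mem_Icc.1 hk
            exact Finset.mem_range.2 (by omega)
          · intro j hj
            have := Finset.mem_range.1 hj
            exact Finset.mem_Icc.2 (by omega)
          · intro k hk
            have := Finset.mem_Icc.1 hk
            omega
          · intro j hj
            omega
          · intro k hk
            rfl
      _ ≤ (n : ℝ) * C + min (Δ - (n : ℝ) * T) C := by
          rw [Finset.sum_range_succ]
          have : ∀ j ∈ Finset.range n, min C (Δ - (j : ℝ) * T) = C := by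
            intro j hj
            have hj' : (j : ℝ) ≤ (n : ℝ) - 1 := by
              have := Finset.mem_range.1 hj
              have : (j : ℝ) + 1 ≤ (n : ℝ) := by exact_mod_cast this
              linarith
            apply min_eq_left
            nlinarith [hT.le]
          rw [Finset.sum_congr rfl this, Finset.sum_const, Finset.card_range,
            nsmul_eq_mul, min_comm]
end
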